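/- arXiv:0905.4334 — 2 statements merged into one kernel-verified Lean document; each statement's English description precedes it below -/
import Mathlib

section
/- Define Xₜ^{n,α} = n^α (Fₙ(t) − F(t)) and 𝐌ⁿ_t = (1/√n)(𝐈ⁿ_t − 𝐀ⁿ_t), where 𝐈ⁿ_t = ∑_{k=1}^n 1{ξ_k ≤ t} and 𝐀ⁿ_t = n∫₀^t (1−Fₙ(s))/(1−F(s)) dF(s). Then for t with F(t) < 1: Xₜ^{n,α} = −∫₀^t X_s^{n,α}/(1 − F(s)) dF(s) + n^{α−1/2}·𝐌ⁿ_t. -/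
/-!
The identity holds for every sample path. On `(0, t]` we have `1 - F > 0`, and there
`(Fₙ - F) / (1 - F) = 1 - (1 - Fₙ) / (1 - F)`; integrating against `dF` and using `F 0 = 0`,
the drift integral equals `F t` minus the compensator integral. What remains is the scaling
`n ^ (α - 1/2) · n ^ (-1/2) · n = n ^ α`.
-/

open MeasureTheory ProbabilityTheory Set

noncomputable def empiricalCDF (x : ℕ → ℝ) (n : ℕ) (s : ℝ) : ℝ :=
  (n : ℝ)⁻¹ * ∑ k ∈ Finset.range n, if x k ≤ s then 1 else 0

theorem monotone_empiricalCDF (x : ℕ → ℝ) (n : ℕ) : Monotone (empiricalCDF x n) := by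
  intro a b hab
  unfold empiricalCDF
  gcongr with k
  split_ifs with ha hb <;> first | exact absurd (ha.trans hab) hb | norm_num

theorem empiricalCDF_mem_Icc (x : ℕ → ℝ) (n : ℕ) (s : ℝ) : empiricalCDF x n s ∈ Icc 0 1 := by
  unfold empiricalCDF
  rw [Finset.sum_boole]
  refine ⟨by positivity, inv_mul_le_one_of_le₀ ?_ n.cast_nonneg⟩
  exact_mod_cast (Finset.card_filter_le _ _).trans (Finset.card_range n).le

theorem Real.rpow_sub_half_mul_inv_sqrt {x : ℝ} (hx : 0 < x) (a : ℝ) :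
    x ^ (a - 1 / 2) * (√x)⁻¹ = x ^ (a - 1) := by
  rw [Real.sqrt_eq_rpow, ← Real.rpow_neg hx.le, ← Real.rpow_add hx]
  ring_nf

namespace StieltjesFunction

variable (F : StieltjesFunction ℝ) {a t : ℝ}

theorem one_sub_pos_of_mem_Ioc (hFt : F t < 1) {s : ℝ} (hs : s ∈ Ioc a t) : 0 < 1 - F s := by
  linarith [F.mono hs.2]

theorem integrableOn_Ioc_div_one_sub (hFt : F t < 1) {g : ℝ → ℝ} (hg : Measurable g) {C : ℝ}
    (hgC : ∀ s ∈ Ioc a t, |g s| ≤ C) :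
    IntegrableOn (fun s => g s / (1 - F s)) (Ioc a t) F.measure := by
  refine Measure.integrableOn_of_bounded (M := C / (1 - F t)) (by simp [measure_Ioc])
    (hg.div (measurable_const.sub F.mono.measurable)).aestronglyMeasurable ?_
  filter_upwards [self_mem_ae_restrict measurableSet_Ioc] with s hs
  rw [Real.norm_eq_abs, abs_div, abs_of_pos (F.one_sub_pos_of_mem_Ioc hFt hs)]
  exact div_le_div₀ ((abs_nonneg _).trans (hgC s hs)) (hgC s hs) (by linarith)
    (by linarith [F.mono hs.2])

theorem setIntegral_Ioc_sub_div_one_sub (hat : a ≤ t) (hFt : F t < 1) {G : ℝ → ℝ}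
    (hG : IntegrableOn (fun s => (1 - G s) / (1 - F s)) (Ioc a t) F.measure) :
    ∫ s in Ioc a t, (G s - F s) / (1 - F s) ∂F.measure
      = F t - F a - ∫ s in Ioc a t, (1 - G s) / (1 - F s) ∂F.measure := by
  have hsplit : EqOn (fun s => (G s - F s) / (1 - F s))
      (fun s => 1 - (1 - G s) / (1 - F s)) (Ioc a t) := by
    intro s hs
    have := F.one_sub_pos_of_mem_Ioc hFt hs
    field_simp
    ring
  have : IsFiniteMeasure (F.measure.restrict (Ioc a t)) :=
    isFiniteMeasure_restrict.2 (by simp [measure_Ioc])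
  rw [setIntegral_congr_fun measurableSet_Ioc hsplit, integral_sub (integrable_const 1) hG,
    setIntegral_const, measureReal_def, measure_Ioc,
    ENNReal.toReal_ofReal (sub_nonneg.2 (F.mono hat)), smul_eq_mul, mul_one]

end StieltjesFunction

theorem stmt10_general {Ω : Type*}
    (n : ℕ) (hn : 1 ≤ n)
    (ξ : ℕ → Ω → ℝ)
    (F : StieltjesFunction ℝ) (hFneg : ∀ s ≤ (0:ℝ), F s = 0)
    (α : ℝ)
    (Fn : Ω → ℝ → ℝ)
    (hFn : ∀ ω s, Fn ω s
        = (n : ℝ)⁻¹ * ∑ k ∈ Finset.range n, (if ξ k ω ≤ s then (1:ℝ) else 0))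
    (t : ℝ) (ht : 0 ≤ t) (hFt : F t < 1) :
    ∀ ω, (n : ℝ) ^ α * (Fn ω t - F t)
      = -(∫ s in Set.Ioc 0 t, (n : ℝ) ^ α * (Fn ω s - F s) / (1 - F s) ∂F.measure)
        + (n : ℝ) ^ (α - 1/2) * ((Real.sqrt n)⁻¹ *
            ((∑ k ∈ Finset.range n, (if ξ k ω ≤ t then (1:ℝ) else 0))
              - (n : ℝ) * ∫ s in Set.Ioc 0 t, (1 - Fn ω s) / (1 - F s) ∂F.measure)) := by
  intro ω
  have hFnω : Fn ω = empiricalCDF (fun k => ξ k ω) n := funext (hFn ω)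
  have hnpos : (0 : ℝ) < n := by exact_mod_cast hn
  have hint : IntegrableOn (fun s => (1 - Fn ω s) / (1 - F s)) (Ioc 0 t) F.measure := by
    refine F.integrableOn_Ioc_div_one_sub hFt
      (measurable_const.sub (hFnω ▸ monotone_empiricalCDF _ n).measurable) (C := 1) fun s _ => ?_
    have hmem := hFnω ▸ empiricalCDF_mem_Icc (fun k => ξ k ω) n s
    exact abs_le.2 ⟨by linarith [hmem.2], by linarith [hmem.1]⟩
  have hcount : ∑ k ∈ Finset.range n, (if ξ k ω ≤ t then (1 : ℝ) else 0) = n * Fn ω t := by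
    rw [hFn, mul_inv_cancel_left₀ hnpos.ne']
  simp_rw [mul_div_assoc, integral_const_mul]
  rw [F.setIntegral_Ioc_sub_div_one_sub ht hFt hint, hFneg 0 le_rfl, hcount, ← mul_assoc,
    Real.rpow_sub_half_mul_inv_sqrt hnpos, Real.rpow_sub_one hnpos.ne']
  field_simp
  ring

/-- semimartingale decomposition of the centered empirical distribution:
for `t` with `F t < 1`,
`Xₜ^{n,α} = -∫₀^t X_s^{n,α}/(1-F s) dF(s) + n^{α-1/2}·𝐌ⁿ_t`, where
`𝐌ⁿ_t = n^{-1/2}(𝐈ⁿ_t - 𝐀ⁿ_t)`. -/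
theorem stmt10 {Ω : Type*} {mΩ : MeasurableSpace Ω} (μ : Measure Ω) [IsProbabilityMeasure μ]
    (n : ℕ) (hn : 1 ≤ n)
    (ξ : ℕ → Ω → ℝ) (hmeas : ∀ k, Measurable (ξ k))
    (hindep : iIndepFun ξ μ)
    (hident : ∀ k, Measure.map (ξ k) μ = Measure.map (ξ 0) μ)
    (hval : ∀ k ω, ξ k ω ∈ Set.Icc (0:ℝ) 1)
    (F : StieltjesFunction ℝ) (hFcont : Continuous F) (hFneg : ∀ s ≤ (0:ℝ), F s = 0)
    (hFdef : ∀ t, F t = (μ {ω | ξ 0 ω ≤ t}).toReal)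
    (α : ℝ) (hα : α ∈ Set.Icc (0:ℝ) (1/2))
    (Fn : Ω → ℝ → ℝ)
    (hFn : ∀ ω s, Fn ω s
        = (n : ℝ)⁻¹ * ∑ k ∈ Finset.range n, (if ξ k ω ≤ s then (1:ℝ) else 0))
    (t : ℝ) (ht : 0 ≤ t) (hFt : F t < 1) :
    ∀ ω, (n : ℝ) ^ α * (Fn ω t - F t)
      = -(∫ s in Set.Ioc 0 t, (n : ℝ) ^ α * (Fn ω s - F s) / (1 - F s) ∂F.measure)
        + (n : ℝ) ^ (α - 1/2) * ((Real.sqrt n)⁻¹ *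
            ((∑ k ∈ Finset.range n, (if ξ k ω ≤ t then (1:ℝ) else 0))
              - (n : ℝ) * ∫ s in Set.Ioc 0 t, (1 - Fn ω s) / (1 - F s) ∂F.measure)) :=
  stmt10_general n hn ξ F hFneg α Fn hFn t ht hFt
end

section
/- Minimizing ε²/( c·(1 − c) ) over c ∈ (0,1) gives minimum value 4ε², attained at c = 1/2. Consequently, inf over admissible paths u with |u_{θ(u)}| = ε of the rate functional J(u) = (1/2)∫₀^{θ(u)} w² dF equals 2ε², attained when F(θ(u)) = 1/2 and w_s = 2ε/(1 − F(s)). -/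
/-!
Since `F` is continuous, it pushes `dF` on `(a, b]` forward to Lebesgue measure on
`(F a, F b]`, so `∫₀^θ (1 - F)⁻² dF = (1 - F θ)⁻¹ - 1 = c / (1 - c)` with `c = F θ`.
Cauchy–Schwarz then gives `ε² ≤ c (1 - c) ∫₀^θ w² dF ≤ (1/4) ∫₀^θ w² dF`, and equality holds
for `c = 1/2` and `w = 2ε / (1 - F)`, where Cauchy–Schwarz is sharp.
-/

open MeasureTheory Set

theorem integral_inv_one_sub_sq {x y : ℝ} (hxy : x ≤ y) (hy : y < 1) :
    ∫ t in Ioc x y, ((1 - t)⁻¹) ^ 2 = (1 - y)⁻¹ - (1 - x)⁻¹ := by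
  have hne : ∀ t ∈ uIcc x y, 1 - t ≠ 0 := fun t ht => by
    rw [uIcc_of_le hxy] at ht
    linarith [ht.2]
  rw [← intervalIntegral.integral_of_le hxy]
  refine intervalIntegral.integral_eq_sub_of_hasDerivAt (f := fun t : ℝ => (1 - t)⁻¹)
    (fun t ht => ?_) ?_
  · refine (((hasDerivAt_id' t).const_sub 1).inv (hne t ht)).congr_deriv ?_
    rw [inv_pow]
    ring
  · exact ((continuousOn_const.sub continuousOn_id).inv₀ hne).pow 2 |>.intervalIntegrable

theorem sq_integral_mul_le {α : Type*} [MeasurableSpace α] {μ : Measure α} {f g : α → ℝ}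
    (hf : MemLp f 2 μ) (hg : MemLp g 2 μ) :
    (∫ x, f x * g x ∂μ) ^ 2 ≤ (∫ x, f x ^ 2 ∂μ) * ∫ x, g x ^ 2 ∂μ := by
  have hfg : Integrable (fun x => f x * g x) μ := hf.integrable_mul hg
  -- the quadratic `t ↦ ∫ (f - t g)²` is nonnegative, so its discriminant is not positive
  have hquad : ∀ t, 0 ≤ (∫ x, g x ^ 2 ∂μ) * (t * t) + (-2 * ∫ x, f x * g x ∂μ) * t
      + ∫ x, f x ^ 2 ∂μ := fun t => by
    have hexp : (fun x => (f x - t * g x) ^ 2)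
        = fun x => f x ^ 2 - 2 * t * (f x * g x) + t ^ 2 * g x ^ 2 := by
      ext x; ring
    have h : 0 ≤ ∫ x, (f x - t * g x) ^ 2 ∂μ := integral_nonneg fun x => sq_nonneg _
    have h1 : Integrable (fun x => f x ^ 2 - 2 * t * (f x * g x)) μ :=
      hf.integrable_sq.sub (hfg.const_mul _)
    rw [hexp, integral_add h1 (hg.integrable_sq.const_mul _),
      integral_sub hf.integrable_sq (hfg.const_mul _), integral_const_mul,
      integral_const_mul] at h
    linarith
  have := discrim_le_zero hquad
  rw [discrim] at this
  linarith

theorem Monotone.exists_preimage_Iic_inter_Ioc_eq {f : ℝ → ℝ} (hf : Monotone f)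
    (hfc : Continuous f) {a b y : ℝ} (hab : a ≤ b) (hy : f a ≤ y) :
    ∃ c ∈ Icc a b, f c = min y (f b) ∧ f ⁻¹' Iic y ∩ Ioc a b = Ioc a c := by
  set K := Icc a b ∩ f ⁻¹' Iic y
  have hK : IsCompact K := isCompact_Icc.inter_right (isClosed_Iic.preimage hfc)
  obtain ⟨c, ⟨hc, hfcy⟩, hcK⟩ := hK.exists_isGreatest ⟨a, ⟨le_rfl, hab⟩, hy⟩
  refine ⟨c, hc, ?_, ?_⟩
  · rcases le_or_gt (f b) y with hby | hyb
    · rw [min_eq_right hby, le_antisymm hc.2 (hcK ⟨⟨hab, le_rfl⟩, hby⟩)]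
    · -- a point of `[c, b]` where `f` takes the value `y` lies in `K`, hence equals `c`
      obtain ⟨t, ht, hft⟩ := intermediate_value_Icc hc.2 hfc.continuousOn ⟨hfcy, hyb.le⟩
      have htc : t ≤ c := hcK ⟨⟨hc.1.trans ht.1, ht.2⟩, hft.le⟩
      rw [min_eq_left hyb.le, ← le_antisymm htc ht.1, hft]
  · ext s
    exact ⟨fun ⟨hs, hsab⟩ => ⟨hsab.1, hcK ⟨Ioc_subset_Icc_self hsab, hs⟩⟩,
      fun hs => ⟨(hf hs.2).trans hfcy, hs.1, hs.2.trans hc.2⟩⟩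

namespace StieltjesFunction

variable (F : StieltjesFunction ℝ)

instance isFiniteMeasure_restrict_Ioc (a b : ℝ) :
    IsFiniteMeasure (F.measure.restrict (Ioc a b)) :=
  isFiniteMeasure_restrict.mpr measure_Ioc_lt_top.ne

theorem map_measure_restrict_Ioc (hF : Continuous F) {a b : ℝ} (hab : a ≤ b) :
    (F.measure.restrict (Ioc a b)).map F = volume.restrict (Ioc (F a) (F b)) := by
  refine Measure.ext_of_Iic _ _ fun y => ?_
  rw [Measure.map_apply F.mono.measurable measurableSet_Iic,
    Measure.restrict_apply (F.mono.measurable measurableSet_Iic),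
    Measure.restrict_apply measurableSet_Iic, inter_comm (Iic y), Ioc_inter_Iic, Real.volume_Ioc]
  rcases lt_or_ge y (F a) with hya | hay
  · have : F ⁻¹' Iic y ∩ Ioc a b = ∅ :=
      eq_empty_of_forall_notMem fun s hs => (hs.1.trans_lt hya).not_ge (F.mono hs.2.1.le)
    rw [this, measure_empty, ENNReal.ofReal_of_nonpos (by linarith [min_le_right (F b) y])]
  · obtain ⟨c, -, hFc, hpre⟩ := F.mono.exists_preimage_Iic_inter_Ioc_eq hF hab hay
    rw [hpre, F.measure_Ioc, hFc, min_comm]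

theorem integral_comp_Ioc (hF : Continuous F) {a b : ℝ} (hab : a ≤ b) {g : ℝ → ℝ}
    (hg : AEStronglyMeasurable g (volume.restrict (Ioc (F a) (F b)))) :
    ∫ s in Ioc a b, g (F s) ∂F.measure = ∫ t in Ioc (F a) (F b), g t := by
  rw [← F.map_measure_restrict_Ioc hF hab] at hg ⊢
  exact (integral_map F.mono.measurable.aemeasurable hg).symm

theorem integral_inv_one_sub_sq (hF : Continuous F) {a b : ℝ} (hab : a ≤ b) (hb : F b < 1) :
    ∫ s in Ioc a b, ((1 - F s)⁻¹) ^ 2 ∂F.measure = (1 - F b)⁻¹ - (1 - F a)⁻¹ := by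
  rw [F.integral_comp_Ioc hF hab (g := fun t => ((1 - t)⁻¹) ^ 2)
    ((measurable_const.sub measurable_id).inv.pow_const 2).aestronglyMeasurable,
    _root_.integral_inv_one_sub_sq (F.mono hab) hb]

theorem memLp_inv_one_sub {a b : ℝ} (hb : F b < 1) :
    MemLp (fun s => (1 - F s)⁻¹) 2 (F.measure.restrict (Ioc a b)) := by
  refine MemLp.of_bound (measurable_const.sub F.mono.measurable).inv.aestronglyMeasurable
    (1 - F b)⁻¹ ?_
  filter_upwards [ae_restrict_mem measurableSet_Ioc] with s hs
  have hFs := F.mono hs.2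
  rw [Real.norm_eq_abs, abs_of_pos (inv_pos.2 (by linarith))]
  exact inv_anti₀ (by linarith) (by linarith)

theorem sq_integral_div_one_sub_le (hF : Continuous F) {a b : ℝ} (hab : a ≤ b) (hb : F b < 1)
    {w : ℝ → ℝ} (hw : MemLp w 2 (F.measure.restrict (Ioc a b))) :
    (∫ s in Ioc a b, w s / (1 - F s) ∂F.measure) ^ 2
      ≤ (∫ s in Ioc a b, w s ^ 2 ∂F.measure) * ((1 - F b)⁻¹ - (1 - F a)⁻¹) := by
  rw [← F.integral_inv_one_sub_sq hF hab hb]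
  simpa only [div_eq_mul_inv] using sq_integral_mul_le hw (F.memLp_inv_one_sub hb)

theorem two_mul_sq_le_half_integral_sq (hF : Continuous F) (hF0 : F 0 = 0) {θ : ℝ} (hθ : 0 ≤ θ)
    (hθ1 : F θ < 1) {w : ℝ → ℝ} (hw : MemLp w 2 (F.measure.restrict (Ioc 0 θ))) {ε : ℝ}
    (hε : (1 - F θ) ^ 2 * (∫ s in Ioc 0 θ, w s / (1 - F s) ∂F.measure) ^ 2 = ε ^ 2) :
    2 * ε ^ 2 ≤ (1 / 2) * ∫ s in Ioc 0 θ, w s ^ 2 ∂F.measure := by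
  have hCS := F.sq_integral_div_one_sub_le hF hθ hθ1 hw
  have hA : 0 ≤ ∫ s in Ioc 0 θ, w s ^ 2 ∂F.measure := integral_nonneg fun s => sq_nonneg _
  rw [hF0] at hCS
  set c := F θ
  set A := ∫ s in Ioc 0 θ, w s ^ 2 ∂F.measure
  have hεA : ε ^ 2 ≤ A * (c * (1 - c)) := by
    have hc1 : 1 - c ≠ 0 := by linarith
    calc ε ^ 2 ≤ (1 - c) ^ 2 * (A * ((1 - c)⁻¹ - (1 - 0)⁻¹)) := by
          rw [← hε]; exact mul_le_mul_of_nonneg_left hCS (sq_nonneg _)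
      _ = A * (c * (1 - c)) := by field_simp; ring
  nlinarith [mul_nonneg hA (sq_nonneg (c - 1 / 2))]

theorem exists_half_integral_sq_eq (hF : Continuous F) (hF0 : F 0 = 0) {θ : ℝ} (hθ : 0 ≤ θ)
    (hθ2 : F θ = 1 / 2) (ε : ℝ) :
    ∃ w : ℝ → ℝ, Measurable w ∧ IntegrableOn (fun s => w s ^ 2) (Ioc 0 θ) F.measure
      ∧ (1 - F θ) ^ 2 * (∫ s in Ioc 0 θ, w s / (1 - F s) ∂F.measure) ^ 2 = ε ^ 2
      ∧ 2 * ε ^ 2 = (1 / 2) * ∫ s in Ioc 0 θ, w s ^ 2 ∂F.measure := by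
  have hθ1 : F θ < 1 := by rw [hθ2]; norm_num
  have hB : ∫ s in Ioc 0 θ, ((1 - F s)⁻¹) ^ 2 ∂F.measure = 1 := by
    rw [F.integral_inv_one_sub_sq hF hθ hθ1, hθ2, hF0]; norm_num
  refine ⟨fun s => 2 * ε * (1 - F s)⁻¹,
    measurable_const.mul (measurable_const.sub F.mono.measurable).inv,
    ((F.memLp_inv_one_sub hθ1).const_mul (2 * ε)).integrable_sq, ?_, ?_⟩
  · simp_rw [div_eq_mul_inv, mul_assoc, ← sq]
    rw [integral_const_mul, integral_const_mul, hB, hθ2]; ring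
  · simp_rw [mul_pow]
    rw [integral_const_mul, hB]; ring

end StieltjesFunction

theorem stmt16_general (ε : ℝ)
    (F : StieltjesFunction ℝ) (hFcont : Continuous F) (hF0 : F 0 = 0)
    (T : ℝ) (hT : 0 < T) (hFT : F T < 1) (hFThalf : 1/2 ≤ F T) :
    (∀ c ∈ Set.Ioo (0:ℝ) 1, 4 * ε ^ 2 ≤ ε ^ 2 / (c * (1 - c)))
    ∧ ε ^ 2 / ((1/2 : ℝ) * (1 - 1/2)) = 4 * ε ^ 2
    ∧ sInf { J : ℝ | ∃ θ ∈ Set.Ioc (0:ℝ) T, ∃ w : ℝ → ℝ,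
        Measurable w
        ∧ IntegrableOn (fun s => (w s) ^ 2) (Set.Ioc 0 θ) F.measure
        ∧ (1 - F θ) ^ 2 * (∫ s in Set.Ioc 0 θ, w s / (1 - F s) ∂F.measure) ^ 2
            = ε ^ 2
        ∧ J = (1/2) * ∫ s in Set.Ioc 0 θ, (w s) ^ 2 ∂F.measure }
      = 2 * ε ^ 2 := by
  refine ⟨fun c hc => ?_, by ring, IsLeast.csInf_eq ⟨?_, ?_⟩⟩
  · rw [le_div_iff₀ (mul_pos hc.1 (sub_pos.2 hc.2))]
    nlinarith [mul_nonneg (sq_nonneg ε) (sq_nonneg (c - 1 / 2))]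
  · obtain ⟨θ, hθ, hFθ⟩ := intermediate_value_Icc hT.le hFcont.continuousOn
      (show (1 / 2 : ℝ) ∈ Icc (F 0) (F T) by rw [hF0]; exact ⟨by norm_num, hFThalf⟩)
    have hθ0 : 0 < θ := hθ.1.lt_of_ne (by rintro rfl; norm_num [hF0] at hFθ)
    exact ⟨θ, ⟨hθ0, hθ.2⟩, F.exists_half_integral_sq_eq hFcont hF0 hθ.1 hFθ ε⟩
  · rintro J ⟨θ, hθ, w, hwm, hw2, hcon, rfl⟩
    exact F.two_mul_sq_le_half_integral_sq hFcont hF0 hθ.1.le ((F.mono hθ.2).trans_lt hFT)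
      ((memLp_two_iff_integrable_sq hwm.aestronglyMeasurable).2 hw2) hcon

/-- minimizing `ε²/(c(1-c))` over `c ∈ (0,1)` gives `4ε²`, attained at
`c = 1/2`; consequently the infimum of the rate functional
`J(u) = (1/2)∫₀^θ w² dF` over admissible controls with boundary value `±ε`
equals `2ε²`, attained when `F θ = 1/2` and `w = 2ε/(1-F)`. -/
theorem stmt16 (ε : ℝ) (hε : 0 < ε)
    (F : StieltjesFunction ℝ) (hFcont : Continuous F) (hF0 : F 0 = 0)
    (T : ℝ) (hT : 0 < T) (hFT : F T < 1) (hFThalf : 1/2 ≤ F T) :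
    (∀ c ∈ Set.Ioo (0:ℝ) 1, 4 * ε ^ 2 ≤ ε ^ 2 / (c * (1 - c)))
    ∧ ε ^ 2 / ((1/2 : ℝ) * (1 - 1/2)) = 4 * ε ^ 2
    ∧ sInf { J : ℝ | ∃ θ ∈ Set.Ioc (0:ℝ) T, ∃ w : ℝ → ℝ,
        Measurable w
        ∧ IntegrableOn (fun s => (w s) ^ 2) (Set.Ioc 0 θ) F.measure
        ∧ (1 - F θ) ^ 2 * (∫ s in Set.Ioc 0 θ, w s / (1 - F s) ∂F.measure) ^ 2
            = ε ^ 2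
        ∧ J = (1/2) * ∫ s in Set.Ioc 0 θ, (w s) ^ 2 ∂F.measure }
      = 2 * ε ^ 2 :=
  stmt16_general ε F hFcont hF0 T hT hFT hFThalf
end
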